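/- arXiv:2407.20346 — 9 statements merged into one kernel-verified Lean document; each statement's English description precedes it below -/
import Mathlib

section
/- If a behaviour admits a local hidden variable model (i.e., for each input tuple x, the probability of output tuple a factorizes as an integral over a hidden variable λ of a product of local response distributions P_i(a_i|x_i,λ)), then there exists a joint probability distribution over all potential outcomes of all measurements of all parties whose marginals reproduce the behaviour. -/
open Finset MeasureTheory

section Framework

variable {I : Type} [Fintype I] [DecidableEq I]
  {M : I → Type} [∀ i, Fintype (M i)] [∀ i, DecidableEq (M i)]
  {O : I → Type} [∀ i, Fintype (O i)] [∀ i, DecidableEq (O i)]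

/-- A behaviour: a family of probability distributions over joint outcomes, one per input tuple. -/
def IsBehaviour (p : (∀ i, M i) → (∀ i, O i) → ℝ) : Prop :=
  (∀ x a, 0 ≤ p x a) ∧ ∀ x, ∑ a, p x a = 1

/-- No-signalling: the marginal over party `i`'s outcome does not depend on party `i`'s input. -/
def NoSignalling (p : (∀ i, M i) → (∀ i, O i) → ℝ) : Prop :=
  ∀ (x x' : ∀ i, M i) (i : I), (∀ j, j ≠ i → x j = x' j) →
    ∀ a : ∀ i, O i,
      ∑ b : O i, p x (Function.update a i b) = ∑ b : O i, p x' (Function.update a i b)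

/-- Local hidden variable model (measure-theoretic form): a probability measure on a hidden
variable space together with local response distributions. -/
def IsLHV (p : (∀ i, M i) → (∀ i, O i) → ℝ) : Prop :=
  ∃ (Λ : Type) (_ : MeasurableSpace Λ) (μ : Measure Λ),
    IsProbabilityMeasure μ ∧
    ∃ R : (i : I) → M i → Λ → O i → ℝ,
      (∀ i xi l a, 0 ≤ R i xi l a) ∧
      (∀ i xi l, ∑ a, R i xi l a = 1) ∧
      (∀ i xi a, Measurable (fun l => R i xi l a)) ∧
      ∀ x a, p x a = ∫ l, (∏ i, R i (x i) l (a i)) ∂μ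

/-- Fully deterministic separable model with finitely many hidden variables. -/
def IsLHVFin (p : (∀ i, M i) → (∀ i, O i) → ℝ) : Prop :=
  ∃ (k : ℕ) (w : Fin k → ℝ) (α : (i : I) → M i → Fin k → O i),
    (∀ l, 0 ≤ w l) ∧ (∑ l, w l = 1) ∧
    ∀ x a, p x a = ∑ l, w l * ∏ i, (if a i = α i (x i) l then (1 : ℝ) else 0)

/-- `J` is a joint probability distribution over all potential outcomes of all measurements of
all parties which reproduces the behaviour `p` by marginalization. -/
def IsJointFor (p : (∀ i, M i) → (∀ i, O i) → ℝ) (J : (∀ i, M i → O i) → ℝ) : Prop :=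
  (∀ g, 0 ≤ J g) ∧ (∑ g, J g = 1) ∧
  ∀ x a, p x a = ∑ g ∈ Finset.univ.filter (fun g : ∀ i, M i → O i => ∀ i, g i (x i) = a i), J g

/-- Local Agency: the marginal on any subset `V` of parties depends only on the inputs of `V`. -/
def LocalAgency (q : (∀ i, M i) → (∀ i, O i) → ℝ) : Prop :=
  ∀ (V : Finset I) (x x' : ∀ i, M i), (∀ i ∈ V, x i = x' i) →
    ∀ a : ∀ i, O i,
      ∑ b ∈ Finset.univ.filter (fun b : ∀ i, O i => ∀ i ∈ V, b i = a i), q x b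
        = ∑ b ∈ Finset.univ.filter (fun b : ∀ i, O i => ∀ i ∈ V, b i = a i), q x' b

/-- Local Friendliness decomposition for friend set `F`, where `one i` is the distinguished
(query) input of party `i`. -/
def IsLF (F : Finset I) (one : ∀ i, M i)
    (p : (∀ i, M i) → (∀ i, O i) → ℝ) : Prop :=
  ∃ (P : (∀ i : {j // j ∈ F}, O i.1) → ℝ)
    (Q : (∀ i : {j // j ∈ F}, O i.1) → (∀ i, M i) → (∀ i, O i) → ℝ),
    (∀ c, 0 ≤ P c) ∧ (∑ c, P c = 1) ∧
    (∀ c x a, 0 ≤ Q c x a) ∧ (∀ c x, ∑ a, Q c x a = 1) ∧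
    (∀ c, LocalAgency (Q c)) ∧
    (∀ c x a, (∃ i : {j // j ∈ F}, x i.1 = one i.1 ∧ a i.1 ≠ c i) → Q c x a = 0) ∧
    ∀ x a, p x a = ∑ c, P c * Q c x a

end Framework


section Aux

variable {I : Type} [Fintype I] [DecidableEq I]
  {M : I → Type} [∀ i, Fintype (M i)] [∀ i, DecidableEq (M i)]
  {O : I → Type} [∀ i, Fintype (O i)] [∀ i, DecidableEq (O i)]

private lemma sum_prod_prod (R : ∀ i, M i → O i → ℝ) :
    ∑ g : ∀ i, M i → O i, ∏ i, ∏ xi, R i xi (g i xi)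
      = ∏ i, ∏ xi, ∑ b, R i xi b := by
  rw [show (∏ i, ∏ xi, ∑ b, R i xi b)
      = ∏ i, ∑ gi ∈ Fintype.piFinset (fun _ : M i => Finset.univ),
          ∏ xi, R i xi (gi xi) by
    refine Finset.prod_congr rfl fun i _ => ?_
    rw [← Finset.prod_univ_sum]]
  rw [Finset.prod_univ_sum]
  simp [Fintype.piFinset_univ]

private lemma key_marginal (R : ∀ i, M i → O i → ℝ)
    (hR : ∀ i xi, ∑ b, R i xi b = 1) (x : ∀ i, M i) (a : ∀ i, O i) :
    ∑ g ∈ Finset.univ.filter (fun g : ∀ i, M i → O i => ∀ i, g i (x i) = a i),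
        ∏ i, ∏ xi, R i xi (g i xi)
      = ∏ i, R i (x i) (a i) := by
  classical
  set T : ∀ i, M i → O i → ℝ := fun i xi b =>
    if xi = x i then (if b = a i then R i xi b else 0) else R i xi b with hT
  have h1 : ∑ g ∈ Finset.univ.filter (fun g : ∀ i, M i → O i => ∀ i, g i (x i) = a i),
      ∏ i, ∏ xi, R i xi (g i xi)
      = ∑ g : ∀ i, M i → O i, ∏ i, ∏ xi, T i xi (g i xi) := by
    rw [Finset.sum_filter]
    refine Finset.sum_congr rfl fun g _ => ?_
    by_cases hg : ∀ i, g i (x i) = a i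
    · rw [if_pos hg]
      refine Finset.prod_congr rfl fun i _ => Finset.prod_congr rfl fun xi _ => ?_
      simp only [hT]
      by_cases hx : xi = x i
      · subst hx; simp [hg i]
      · simp [hx]
    · rw [if_neg hg]
      push_neg at hg
      obtain ⟨i, hi⟩ := hg
      refine (Finset.prod_eq_zero (Finset.mem_univ i) ?_).symm
      refine Finset.prod_eq_zero (Finset.mem_univ (x i)) ?_
      simp [hT, hi]
  rw [h1, sum_prod_prod]
  refine Finset.prod_congr rfl fun i _ => ?_
  have : ∀ xi : M i, ∑ b, T i xi b = if xi = x i then R i (x i) (a i) else 1 := by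
    intro xi
    by_cases hx : xi = x i
    · subst hx
      simp [hT, Finset.sum_ite_eq' Finset.univ (a i)]
    · simp [hT, hx, hR i xi]
  rw [Finset.prod_congr rfl fun xi _ => this xi, Finset.prod_ite_eq' Finset.univ (x i)]
  simp

end Aux

/-- if a behaviour admits an LHV model, then there exists a joint probability
distribution over all potential outcomes of all measurements of all parties whose marginals
reproduce the behaviour. -/
theorem lhv_implies_joint {I : Type} [Fintype I] [DecidableEq I]
    {M : I → Type} [∀ i, Fintype (M i)] [∀ i, DecidableEq (M i)]
    {O : I → Type} [∀ i, Fintype (O i)] [∀ i, DecidableEq (O i)]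
    (p : (∀ i, M i) → (∀ i, O i) → ℝ) (h : IsLHV p) :
    ∃ J : (∀ i, M i → O i) → ℝ, IsJointFor p J := by
  obtain ⟨Λ, mΛ, μ, hμ, R, hRnn, hRsum, hRmeas, hRp⟩ := h
  have hRle1 : ∀ i xi l b, R i xi l b ≤ 1 := fun i xi l b => by
    calc R i xi l b ≤ ∑ b', R i xi l b' :=
          Finset.single_le_sum (fun b' _ => hRnn i xi l b') (Finset.mem_univ b)
    _ = 1 := hRsum i xi l
  set F : (∀ i, M i → O i) → Λ → ℝ := fun g l => ∏ i, ∏ xi, R i xi l (g i xi) with hF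
  have hFnn : ∀ g l, 0 ≤ F g l := fun g l =>
    Finset.prod_nonneg fun i _ => Finset.prod_nonneg fun xi _ => hRnn i xi l (g i xi)
  have hFle : ∀ g l, F g l ≤ 1 := fun g l =>
    Finset.prod_le_one (fun i _ => Finset.prod_nonneg fun xi _ => hRnn i xi l (g i xi))
      (fun i _ => Finset.prod_le_one (fun xi _ => hRnn i xi l (g i xi))
        (fun xi _ => hRle1 i xi l (g i xi)))
  have hFmeas : ∀ g, Measurable (F g) := by
    intro g
    apply Finset.measurable_prod
    intro i _
    exact Finset.measurable_prod _ fun xi _ => hRmeas i xi (g i xi)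
  have hFint : ∀ g, Integrable (F g) μ := by
    intro g
    refine (integrable_const (1 : ℝ)).mono' (hFmeas g).aestronglyMeasurable ?_
    filter_upwards with l
    rw [Real.norm_eq_abs, abs_of_nonneg (hFnn g l)]
    exact hFle g l
  refine ⟨fun g => ∫ l, F g l ∂μ, fun g => integral_nonneg (fun l => hFnn g l), ?_, ?_⟩
  · rw [← integral_finset_sum _ fun g _ => hFint g]
    have : ∀ l, ∑ g : ∀ i, M i → O i, F g l = 1 := by
      intro l
      rw [hF]
      rw [sum_prod_prod (fun i xi b => R i xi l b)]
      simp [hRsum]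
    simp only [this]
    simp
  · intro x a
    rw [← integral_finset_sum _ fun g _ => hFint g]
    rw [hRp x a]
    refine integral_congr_ae (Filter.Eventually.of_forall fun l => ?_)
    exact (key_marginal (fun i xi b => R i xi l b) (fun i xi => hRsum i xi l) x a).symm
end

section
/- If a behaviour admits a joint probability distribution over all potential outcomes of all measurements of all parties recovering the behaviour by marginalization, then the behaviour admits a fully deterministic separable model: ℘(a|x) = Σ_λ P(λ) ∏_i δ_{a_i, α_{x_i}(λ)} for some finite set Λ, probability weights P(λ), and deterministic response functions α_{x_i}: Λ → O_{x_i}. -/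
open Finset MeasureTheory

/-- if a behaviour admits a joint probability distribution over all potential
outcomes of all measurements recovering it by marginalization, then it admits a fully
deterministic separable model with finitely many hidden variables. -/
theorem joint_implies_deterministic {I : Type} [Fintype I] [DecidableEq I]
    {M : I → Type} [∀ i, Fintype (M i)] [∀ i, DecidableEq (M i)]
    {O : I → Type} [∀ i, Fintype (O i)] [∀ i, DecidableEq (O i)]
    (p : (∀ i, M i) → (∀ i, O i) → ℝ) (J : (∀ i, M i → O i) → ℝ)
    (h : IsJointFor p J) : IsLHVFin p := by
  obtain ⟨hnn, hsum, hmarg⟩ := h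
  classical
  let e := (Fintype.equivFin (∀ i, M i → O i)).symm
  refine ⟨Fintype.card (∀ i, M i → O i), fun l => J (e l), fun i xi l => e l i xi,
    fun l => hnn _, ?_, ?_⟩
  · rw [← Equiv.sum_comp e (fun g => J g)] at hsum
    exact hsum
  · intro x a
    rw [hmarg x a, Finset.sum_filter, ← Equiv.sum_comp e
      (fun g => if (∀ i, g i (x i) = a i) then J g else 0)]
    · congr 1
      ext l
      by_cases hc : ∀ i, e l i (x i) = a i
      · rw [if_pos hc, Finset.prod_eq_one (fun i _ => if_pos (hc i).symm), mul_one]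
      · push_neg at hc
        obtain ⟨i, hi⟩ := hc
        rw [if_neg (by push_neg; exact ⟨i, hi⟩)]
        rw [Finset.prod_eq_zero (Finset.mem_univ i) (by simp [Ne.symm hi])]
        ring
end

section
/- A behaviour admits an LHV model if and only if it admits a fully deterministic separable model with finitely many hidden variables (Fine's theorem, equivalence of the three conditions: LHV-modelability, existence of a global joint distribution, and deterministic separable decomposition). -/
open Finset MeasureTheory

/-!
Integrating the product `∏ᵢ ∏ₘ Rᵢ(m, λ)(gᵢ(m))` of all local response functions over the hidden
variable gives a distribution `J` on global assignments `g` of an outcome to every measurement.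
Its marginal at an input tuple `x` is `℘(·|x)`: summing out the outcomes of the measurements that
are not performed contributes factors `1`. Enumerating the finitely many assignments turns `J`
into a deterministic model with weights `J(g)`, and a deterministic model with finitely many
hidden variables is an LHV model for a finitely supported measure.
-/

section ProductSums

variable {R : Type*} [CommSemiring R]

theorem Fintype.prod_sum_filter {ι : Type*} [Fintype ι] [DecidableEq ι] {κ : ι → Type*}
    [∀ i, Fintype (κ i)] (P : ∀ i, κ i → Prop) [∀ i, DecidablePred (P i)] (f : ∀ i, κ i → R) :
    ∏ i, ∑ k with P i k, f i k = ∑ g : ∀ i, κ i with ∀ i, P i (g i), ∏ i, f i (g i) := by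
  rw [Finset.prod_univ_sum]
  congr 1
  ext g
  simp [Fintype.mem_piFinset]

theorem Fintype.sum_prod_eq_one {ι : Type*} [Fintype ι] [DecidableEq ι] {κ : ι → Type*}
    [∀ i, Fintype (κ i)] (f : ∀ i, κ i → R) (hf : ∀ i, ∑ k, f i k = 1) :
    ∑ g : ∀ i, κ i, ∏ i, f i (g i) = 1 := by
  simp [← Fintype.prod_sum, hf]

theorem Fintype.sum_prod_filter_apply_eq {α γ : Type*} [Fintype α] [DecidableEq α]
    [Fintype γ] [DecidableEq γ] (f : α → γ → R) (hf : ∀ a, ∑ c, f a c = 1) (a : α) (c : γ) :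
    ∑ h : α → γ with h a = c, ∏ b, f b (h b) = f a c := by
  calc ∑ h : α → γ with h a = c, ∏ b, f b (h b)
      = ∑ h : α → γ with ∀ b, (b = a → h b = c), ∏ b, f b (h b) := by
        simp
    _ = ∏ b, ∑ k with (b = a → k = c), f b k :=
        (Fintype.prod_sum_filter (fun b k => b = a → k = c) f).symm
    _ = f a c := by
        rw [Fintype.prod_eq_single a fun b hb => by simp [hb, hf]]
        simp [Finset.filter_eq']

end ProductSums

section Assignments

variable {I : Type} [Fintype I] {M : I → Type} [∀ i, Fintype (M i)] {O : I → Type}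
  [∀ i, Fintype (O i)]

def assignmentWeight (r : ∀ i, M i → O i → ℝ) (g : ∀ i, M i → O i) : ℝ :=
  ∏ i, ∏ m, r i m (g i m)

theorem assignmentWeight_mem_Icc (r : ∀ i, M i → O i → ℝ) (hr₀ : ∀ i m o, 0 ≤ r i m o)
    (hr₁ : ∀ i m, ∑ o, r i m o = 1) (g : ∀ i, M i → O i) :
    assignmentWeight r g ∈ Set.Icc 0 1 := by
  have hr_le : ∀ i m o, r i m o ≤ 1 := fun i m o =>
    hr₁ i m ▸ Finset.single_le_sum (fun o' _ => hr₀ i m o') (Finset.mem_univ o)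
  exact ⟨prod_nonneg fun i _ => prod_nonneg fun m _ => hr₀ i m _,
    prod_le_one (fun i _ => prod_nonneg fun m _ => hr₀ i m _)
      fun i _ => prod_le_one (fun m _ => hr₀ i m _) fun m _ => hr_le i m _⟩

variable [DecidableEq I] [∀ i, DecidableEq (M i)]

theorem sum_assignmentWeight (r : ∀ i, M i → O i → ℝ) (hr₁ : ∀ i m, ∑ o, r i m o = 1) :
    ∑ g, assignmentWeight r g = 1 :=
  Fintype.sum_prod_eq_one _ fun i => Fintype.sum_prod_eq_one _ (hr₁ i)

theorem sum_filter_assignmentWeight [∀ i, DecidableEq (O i)] (r : ∀ i, M i → O i → ℝ)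
    (hr₁ : ∀ i m, ∑ o, r i m o = 1) (x : ∀ i, M i) (a : ∀ i, O i) :
    ∑ g with ∀ i, g i (x i) = a i, assignmentWeight r g = ∏ i, r i (x i) (a i) := by
  unfold assignmentWeight
  rw [← Fintype.prod_sum_filter (fun i (h : M i → O i) => h (x i) = a i)
    fun i h => ∏ m, r i m (h m)]
  exact prod_congr rfl fun i _ => Fintype.sum_prod_filter_apply_eq _ (hr₁ i) _ _

end Assignments

section Fine

variable {I : Type} [Fintype I] {M : I → Type} {O : I → Type} [∀ i, Fintype (O i)]
  [∀ i, DecidableEq (O i)] {p : (∀ i, M i) → (∀ i, O i) → ℝ}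

theorem IsLHVFin.isLHV (h : IsLHVFin p) : IsLHV p := by
  obtain ⟨k, w, α, hw₀, hw₁, hp⟩ := h
  refine ⟨Fin k, ⊤, Measure.sum fun l => ENNReal.ofReal (w l) • Measure.dirac l,
    HasSum.isProbabilityMeasure_sum_dirac hw₀ (hw₁ ▸ hasSum_fintype w),
    fun i m l o => if o = α i m l then 1 else 0, fun i m l o => by positivity,
    fun i m l => by simp, fun i m o => measurable_from_top, fun x a => ?_⟩
  rw [hp, integral_sum_dirac fun l => ENNReal.ofReal_ne_top, tsum_fintype]
  simp only [ENNReal.toReal_ofReal (hw₀ _), smul_eq_mul]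

variable [DecidableEq I] [∀ i, Fintype (M i)] [∀ i, DecidableEq (M i)]

theorem IsLHV.exists_isJointFor (h : IsLHV p) : ∃ J, IsJointFor p J := by
  obtain ⟨Λ, _, μ, _, R, hR₀, hR₁, hR_meas, hp⟩ := h
  let W : (∀ i, M i → O i) → Λ → ℝ := fun g l => assignmentWeight (fun i m => R i m l) g
  have hW_mem : ∀ g l, W g l ∈ Set.Icc 0 1 := fun g l =>
    assignmentWeight_mem_Icc _ (fun i m => hR₀ i m l) (fun i m => hR₁ i m l) g
  have hW_int : ∀ g, Integrable (W g) μ := fun g =>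
    Integrable.of_mem_Icc 0 1
      (Finset.measurable_prod _ fun i _ => Finset.measurable_prod _ fun m _ =>
        hR_meas i m (g i m)).aemeasurable
      (ae_of_all _ (hW_mem g))
  refine ⟨fun g => ∫ l, W g l ∂μ, fun g => integral_nonneg fun l => (hW_mem g l).1, ?_,
    fun x a => ?_⟩
  · rw [← integral_finsetSum _ fun g _ => hW_int g]
    simp [W, sum_assignmentWeight _ fun i m => hR₁ i m _]
  · rw [hp, ← integral_finsetSum _ fun g _ => hW_int g]
    simp only [W, sum_filter_assignmentWeight _ (fun i m => hR₁ i m _)]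

theorem IsJointFor.isLHVFin {J : (∀ i, M i → O i) → ℝ} (h : IsJointFor p J) : IsLHVFin p := by
  obtain ⟨hJ₀, hJ₁, hp⟩ := h
  let e := Fintype.equivFin (∀ i, M i → O i)
  refine ⟨_, J ∘ e.symm, fun i m l => e.symm l i m, fun l => hJ₀ _,
    by rwa [Function.comp_def, e.symm.sum_comp J], fun x a => ?_⟩
  rw [hp, Finset.sum_filter, ← e.symm.sum_comp]
  simp only [Function.comp_apply, Fintype.prod_boole, mul_boole, eq_comm]

end Fine

/-- Fine's theorem: a behaviour admits an LHV model if and only if it admits a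
fully deterministic separable model with finitely many hidden variables; both are moreover
equivalent to the existence of a global joint distribution reproducing the behaviour. -/
theorem fine_theorem {I : Type} [Fintype I] [DecidableEq I]
    {M : I → Type} [∀ i, Fintype (M i)] [∀ i, DecidableEq (M i)]
    {O : I → Type} [∀ i, Fintype (O i)] [∀ i, DecidableEq (O i)]
    (p : (∀ i, M i) → (∀ i, O i) → ℝ) :
    (IsLHV p ↔ IsLHVFin p) ∧ (IsLHV p ↔ ∃ J : (∀ i, M i → O i) → ℝ, IsJointFor p J) :=
  ⟨⟨fun h => h.exists_isJointFor.elim fun _ hJ => hJ.isLHVFin, IsLHVFin.isLHV⟩,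
    ⟨IsLHV.exists_isJointFor, fun ⟨_, hJ⟩ => hJ.isLHVFin.isLHV⟩⟩
end

section
/- Every Local Friendliness behaviour is no-signalling: if a behaviour admits a decomposition ℘(a|x) = Σ_c [∏_{i ∈ F_x} δ_{a_i, c_i}] · Q(a_{J_x} | x_{J_x}, c) · P(c), where the conditional distributions Q satisfy the marginal-consistency (Local Agency) constraints, then ℘ satisfies the no-signalling conditions. -/
open Finset MeasureTheory

/-- every Local Friendliness behaviour satisfies the no-signalling conditions. -/
theorem lf_implies_noSignalling {I : Type} [Fintype I] [DecidableEq I]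
    {M : I → Type} [∀ i, Fintype (M i)] [∀ i, DecidableEq (M i)]
    {O : I → Type} [∀ i, Fintype (O i)] [∀ i, DecidableEq (O i)]
    (F : Finset I) (one : ∀ i, M i)
    (p : (∀ i, M i) → (∀ i, O i) → ℝ) (h : IsLF F one p) : NoSignalling p := by
  obtain ⟨P, Q, _, _, _, _, hLA, _, hdec⟩ := h
  intro x x' i hxx' a
  have key : ∀ (q : (∀ i, O i) → ℝ),
      ∑ b : O i, q (Function.update a i b)
        = ∑ b ∈ Finset.univ.filter
            (fun b : ∀ i, O i => ∀ j ∈ Finset.univ.erase i, b j = a j), q b := by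
    intro q
    refine Finset.sum_nbij' (fun b => Function.update a i b) (fun b => b i) ?_ ?_ ?_ ?_ ?_
    · intro b _
      simp only [Finset.mem_filter, Finset.mem_univ, true_and]
      intro j hj
      exact Function.update_of_ne (Finset.ne_of_mem_erase hj) _ _
    · intro b _; exact Finset.mem_univ _
    · intro b _; simp
    · intro b hb
      simp only [Finset.mem_filter, Finset.mem_univ, true_and] at hb
      funext j
      by_cases hji : j = i
      · subst hji; simp
      · show Function.update a i (b i) j = b j
        rw [Function.update_of_ne hji]
        exact (hb j (Finset.mem_erase.2 ⟨hji, Finset.mem_univ _⟩)).symm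
    · intro b _; rfl
  have hmarg : ∀ c, ∑ b : O i, Q c x (Function.update a i b)
      = ∑ b : O i, Q c x' (Function.update a i b) := by
    intro c
    rw [key, key]
    exact hLA c (Finset.univ.erase i) x x'
      (fun j hj => hxx' j (Finset.ne_of_mem_erase hj)) a
  calc ∑ b : O i, p x (Function.update a i b)
      = ∑ b : O i, ∑ c, P c * Q c x (Function.update a i b) := by
        exact Finset.sum_congr rfl fun b _ => hdec x _
    _ = ∑ c, P c * ∑ b : O i, Q c x (Function.update a i b) := by
        rw [Finset.sum_comm]; simp [Finset.mul_sum]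
    _ = ∑ c, P c * ∑ b : O i, Q c x' (Function.update a i b) := by
        exact Finset.sum_congr rfl fun c _ => by rw [hmarg c]
    _ = ∑ b : O i, p x' (Function.update a i b) := by
        simp only [Finset.mul_sum]
        rw [Finset.sum_comm]
        exact Finset.sum_congr rfl fun b _ => (hdec x' _).symm
end

section
/- Every LHV-modelable behaviour is a Local Friendliness behaviour: if ℘(a|x) admits a deterministic separable model, then it admits an LF decomposition ℘(a|x) = Σ_c [∏_{i ∈ F_x} δ_{a_i, c_i}] · Q(a_{J_x} | x_{J_x}, c) · P(c) with Q satisfying Local Agency, for any choice of the friend set I_F. -/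
open Finset MeasureTheory

section AuxLF

variable {I : Type} [Fintype I] [DecidableEq I]
  {O : I → Type} [∀ i, Fintype (O i)] [∀ i, DecidableEq (O i)]

lemma lf_prod_ind (b g : ∀ i, O i) :
    (∏ i, if b i = g i then (1:ℝ) else 0) = if b = g then 1 else 0 := by
  by_cases h : b = g
  · simp [h]
  · obtain ⟨i, hi⟩ := Function.ne_iff.mp h
    rw [if_neg h]
    exact Finset.prod_eq_zero (Finset.mem_univ i) (if_neg hi)

lemma lf_sum_prod_ind (g : ∀ i, O i) :
    (∑ a : ∀ i, O i, ∏ i, if a i = g i then (1:ℝ) else 0) = 1 := by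
  simp [lf_prod_ind]

lemma lf_sum_filter_prod_ind (V : Finset I) (a g : ∀ i, O i) :
    (∑ b ∈ Finset.univ.filter (fun b : ∀ i, O i => ∀ i ∈ V, b i = a i),
        ∏ i, if b i = g i then (1:ℝ) else 0)
      = if (∀ i ∈ V, g i = a i) then 1 else 0 := by
  simp only [lf_prod_ind]
  rw [Finset.sum_ite_eq' _ g (fun _ => (1:ℝ))]
  simp

end AuxLF

/-- every LHV-modelable behaviour is a Local Friendliness behaviour, for any
choice of the friend set. -/
theorem lhv_implies_lf {I : Type} [Fintype I] [DecidableEq I]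
    {M : I → Type} [∀ i, Fintype (M i)] [∀ i, DecidableEq (M i)]
    {O : I → Type} [∀ i, Fintype (O i)] [∀ i, DecidableEq (O i)]
    (p : (∀ i, M i) → (∀ i, O i) → ℝ) (h : IsLHVFin p)
    (F : Finset I) (one : ∀ i, M i) : IsLF F one p := by
  obtain ⟨k, w, α, hw0, hw1, hp⟩ := h
  have hk : k ≠ 0 := by rintro rfl; simpa using hw1
  let l0 : Fin k := ⟨0, Nat.pos_of_ne_zero hk⟩
  -- the friends' joint outcome determined by the hidden variable
  let cl : Fin k → (∀ i : {j // j ∈ F}, O i.1) := fun l i => α i.1 (one i.1) l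
  -- indicator that hidden variable l is compatible with friend outcomes c
  let χ : (∀ i : {j // j ∈ F}, O i.1) → Fin k → ℝ := fun c l => if c = cl l then 1 else 0
  let P : (∀ i : {j // j ∈ F}, O i.1) → ℝ := fun c => ∑ l, w l * χ c l
  -- local response forced to c on friends queried with `one`
  let β : (∀ i : {j // j ∈ F}, O i.1) → ∀ i, M i → Fin k → O i := fun c i xi l =>
    if h : i ∈ F ∧ xi = one i then c ⟨i, h.1⟩ else α i xi l
  let D : (∀ i : {j // j ∈ F}, O i.1) → (∀ i, M i) → (∀ i, O i) → Fin k → ℝ :=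
    fun c x a l => ∏ i, if a i = β c i (x i) l then (1:ℝ) else 0
  let Q : (∀ i : {j // j ∈ F}, O i.1) → (∀ i, M i) → (∀ i, O i) → ℝ := fun c x a =>
    if P c = 0 then D c x a l0 else (∑ l, w l * χ c l * D c x a l) / P c
  have hχ0 : ∀ c l, 0 ≤ χ c l := by intro c l; simp only [χ]; positivity
  have hP0 : ∀ c, 0 ≤ P c := by
    intro c; exact Finset.sum_nonneg fun l _ => mul_nonneg (hw0 l) (hχ0 c l)
  have hD0 : ∀ c x a l, 0 ≤ D c x a l := by
    intro c x a l
    exact Finset.prod_nonneg fun i _ => by positivity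
  have hQ0 : ∀ c x a, 0 ≤ Q c x a := by
    intro c x a
    simp only [Q]
    split
    · exact hD0 c x a l0
    · apply div_nonneg _ (hP0 c)
      exact Finset.sum_nonneg fun l _ =>
        mul_nonneg (mul_nonneg (hw0 l) (hχ0 c l)) (hD0 c x a l)
  have hDsum : ∀ c x l, ∑ a, D c x a l = 1 := by
    intro c x l
    exact lf_sum_prod_ind (fun i => β c i (x i) l)
  have hPsum : ∑ c, P c = 1 := by
    simp only [P]
    rw [Finset.sum_comm]
    have : ∀ l, ∑ c : (∀ i : {j // j ∈ F}, O i.1), w l * χ c l = w l := by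
      intro l
      simp only [χ, mul_ite, mul_one, mul_zero]
      rw [Finset.sum_ite_eq' Finset.univ (cl l) (fun _ => w l)]
      simp
    simp only [this]; exact hw1
  have hQsum : ∀ c x, ∑ a, Q c x a = 1 := by
    intro c x
    simp only [Q]
    by_cases hc : P c = 0
    · simp only [hc, if_true, hDsum c x l0]
    · simp only [hc, if_false]
      rw [← Finset.sum_div, Finset.sum_comm]
      have : ∀ l, ∑ a, w l * χ c l * D c x a l = w l * χ c l := by
        intro l
        rw [← Finset.mul_sum, hDsum c x l, mul_one]
      simp only [this]
      exact div_self hc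
  -- wl * χ vanishes termwise when P c = 0
  have hzero : ∀ c, P c = 0 → ∀ l, w l * χ c l = 0 := by
    intro c hc l
    have := (Finset.sum_eq_zero_iff_of_nonneg
      (fun l _ => mul_nonneg (hw0 l) (hχ0 c l))).mp hc
    exact this l (Finset.mem_univ l)
  have hkey : ∀ c x a, P c * Q c x a = ∑ l, w l * χ c l * D c x a l := by
    intro c x a
    simp only [Q]
    by_cases hc : P c = 0
    · simp only [hc, if_true, zero_mul]
      symm
      exact Finset.sum_eq_zero fun l _ => by rw [hzero c hc l, zero_mul]
    · simp only [hc, if_false]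
      field_simp
  -- Local agency of each Q c
  have hLA : ∀ c, LocalAgency (Q c) := by
    intro c V x x' hxx' a
    have hsum : ∀ (y : ∀ i, M i) (l : Fin k),
        (∑ b ∈ Finset.univ.filter (fun b : ∀ i, O i => ∀ i ∈ V, b i = a i), D c y b l)
          = if (∀ i ∈ V, β c i (y i) l = a i) then 1 else 0 :=
      fun y l => lf_sum_filter_prod_ind V a (fun i => β c i (y i) l)
    have hcong : ∀ l, (if (∀ i ∈ V, β c i (x i) l = a i) then (1:ℝ) else 0)
        = if (∀ i ∈ V, β c i (x' i) l = a i) then 1 else 0 := by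
      intro l
      congr 1
      refine propext (forall_congr' fun i => forall_congr' fun hi => ?_)
      rw [hxx' i hi]
    simp only [Q]
    by_cases hc : P c = 0
    · simp only [hc, if_true]
      rw [hsum x l0, hsum x' l0, hcong l0]
    · simp only [hc, if_false]
      rw [← Finset.sum_div, ← Finset.sum_div, Finset.sum_comm, Finset.sum_comm
        (s := Finset.univ.filter (fun b : ∀ i, O i => ∀ i ∈ V, b i = a i))]
      congr 1
      apply Finset.sum_congr rfl
      intro l _
      rw [← Finset.mul_sum, ← Finset.mul_sum, hsum x l, hsum x' l, hcong l]
  -- the forcing property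
  have hforce : ∀ c x a, (∃ i : {j // j ∈ F}, x i.1 = one i.1 ∧ a i.1 ≠ c i) →
      Q c x a = 0 := by
    intro c x a ⟨i, hx, ha⟩
    have hβ : ∀ l, β c i.1 (x i.1) l = c i := by
      intro l
      simp only [β]
      rw [dif_pos ⟨i.2, hx⟩]
    have hD : ∀ l, D c x a l = 0 := by
      intro l
      exact Finset.prod_eq_zero (Finset.mem_univ i.1) (by rw [hβ l]; exact if_neg ha)
    simp only [Q]
    split
    · exact hD l0
    · rw [Finset.sum_eq_zero fun l _ => by rw [hD l, mul_zero], zero_div]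
  -- reproduction of p
  have hrepro : ∀ x a, p x a = ∑ c, P c * Q c x a := by
    intro x a
    simp only [hkey]
    rw [Finset.sum_comm, hp x a]
    apply Finset.sum_congr rfl
    intro l _
    have hβeq : D (cl l) x a l = ∏ i, if a i = α i (x i) l then (1:ℝ) else 0 := by
      apply Finset.prod_congr rfl
      intro i _
      congr 2
      simp only [β]
      split
      · next h => simp only [cl]; rw [h.2]
      · rfl
    have : ∀ c : (∀ i : {j // j ∈ F}, O i.1),
        w l * χ c l * D c x a l = if c = cl l then w l * D c x a l else 0 := by
      intro c
      simp only [χ]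
      by_cases hcl : c = cl l
      · rw [if_pos hcl, if_pos hcl, mul_one]
      · rw [if_neg hcl, if_neg hcl, mul_zero, zero_mul]
    simp only [this]
    rw [Finset.sum_ite_eq' Finset.univ (cl l) (fun c => w l * D c x a l)]
    simp [hβeq]
  exact ⟨P, Q, hP0, hPsum, hQ0, hQsum, hLA, hforce, hrepro⟩
end

section
/- Monotonicity of LF sets in the friend set: if S = (I_A, M, O, I_F) and S' = (I_A, M, O, I_F') are two scenarios with the same public data and I_F' ⊆ I_F, then every LF behaviour of S is an LF behaviour of S', i.e., LF(S) ⊆ LF(S'). -/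
open Finset MeasureTheory

/-- monotonicity of LF sets in the friend set: if `F' ⊆ F` then every LF
behaviour for friend set `F` is an LF behaviour for friend set `F'`. -/
theorem lf_monotone_friends {I : Type} [Fintype I] [DecidableEq I]
    {M : I → Type} [∀ i, Fintype (M i)] [∀ i, DecidableEq (M i)]
    {O : I → Type} [∀ i, Fintype (O i)] [∀ i, DecidableEq (O i)]
    (F F' : Finset I) (hFF : F' ⊆ F) (one : ∀ i, M i)
    (p : (∀ i, M i) → (∀ i, O i) → ℝ) (h : IsLF F one p) : IsLF F' one p := by
  classical
  obtain ⟨P, Q, hP0, hP1, hQ0, hQ1, hLA, hZ, hrep⟩ := h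
  set res : (∀ i : {j // j ∈ F}, O i.1) → (∀ i : {j // j ∈ F'}, O i.1) :=
    fun c i => c ⟨i.1, hFF i.2⟩ with hresdef
  have hEne : Nonempty (∀ i : {j // j ∈ F}, O i.1) := by
    by_contra hne
    rw [not_nonempty_iff] at hne
    rw [Finset.univ_eq_empty, Finset.sum_empty] at hP1
    norm_num at hP1
  obtain ⟨c0⟩ := hEne
  have hAne : Nonempty (∀ i, O i) := by
    by_contra hne
    rw [not_nonempty_iff] at hne
    have h1 := hQ1 c0 one
    rw [Finset.univ_eq_empty, Finset.sum_empty] at h1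
    norm_num at h1
  obtain ⟨a0⟩ := hAne
  set t : (∀ i : {j // j ∈ F'}, O i.1) → (∀ i, O i) :=
    fun c' i => if hi : i ∈ F' then c' ⟨i, hi⟩ else a0 i with htdef
  set P' : (∀ i : {j // j ∈ F'}, O i.1) → ℝ :=
    fun c' => ∑ c ∈ Finset.univ.filter (fun c => res c = c'), P c with hP'def
  set S : (∀ i : {j // j ∈ F'}, O i.1) → (∀ i, M i) → (∀ i, O i) → ℝ :=
    fun c' x a => ∑ c ∈ Finset.univ.filter (fun c => res c = c'), P c * Q c x a with hSdef
  have hP'0 : ∀ c', 0 ≤ P' c' := fun c' => Finset.sum_nonneg fun c _ => hP0 c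
  have hS0 : ∀ c' x a, 0 ≤ S c' x a :=
    fun c' x a => Finset.sum_nonneg fun c _ => mul_nonneg (hP0 c) (hQ0 c x a)
  have hSsum : ∀ c' x, ∑ a, S c' x a = P' c' := by
    intro c' x
    rw [hSdef, Finset.sum_comm]
    refine Finset.sum_congr rfl fun c _ => ?_
    rw [← Finset.mul_sum, hQ1 c x, mul_one]
  have hSzero : ∀ c' x a, ¬ 0 < P' c' → S c' x a = 0 := by
    intro c' x a hc
    have hP'z : P' c' = 0 := le_antisymm (not_lt.1 hc) (hP'0 c')
    refine Finset.sum_eq_zero fun c hcmem => ?_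
    have := (Finset.sum_eq_zero_iff_of_nonneg (fun c _ => hP0 c)).1 hP'z c hcmem
    rw [this, zero_mul]
  refine ⟨P', fun c' x a => if 0 < P' c' then S c' x a / P' c' else (if a = t c' then 1 else 0),
    hP'0, ?_, ?_, ?_, ?_, ?_, ?_⟩
  · rw [← hP1]
    exact Finset.sum_fiberwise _ _ _
  · intro c x a
    dsimp only
    split
    · exact div_nonneg (hS0 c x a) (hP'0 c)
    · split <;> norm_num
  · intro c' x
    dsimp only
    split
    · rename_i hpos
      rw [← Finset.sum_div, hSsum c' x, div_self (ne_of_gt hpos)]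
    · simp [Finset.sum_ite_eq']
  · intro c' V x x' hxx a
    dsimp only
    by_cases hpos : 0 < P' c'
    · simp only [if_pos hpos]
      rw [← Finset.sum_div, ← Finset.sum_div]
      congr 1
      have key : ∀ y : ∀ i, M i,
          ∑ b ∈ Finset.univ.filter (fun b : ∀ i, O i => ∀ i ∈ V, b i = a i), S c' y b
            = ∑ c ∈ Finset.univ.filter (fun c => res c = c'), P c *
                ∑ b ∈ Finset.univ.filter (fun b : ∀ i, O i => ∀ i ∈ V, b i = a i), Q c y b := by
        intro y
        rw [hSdef]
        dsimp only
        rw [Finset.sum_comm]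
        exact Finset.sum_congr rfl fun c _ => (Finset.mul_sum _ _ _).symm
      rw [key x, key x']
      exact Finset.sum_congr rfl fun c _ => by rw [hLA c V x x' hxx a]
    · simp only [if_neg hpos]
  · rintro c' x a ⟨i, hxi, hai⟩
    dsimp only
    by_cases hpos : 0 < P' c'
    · rw [if_pos hpos]
      have hS : S c' x a = 0 := by
        refine Finset.sum_eq_zero fun c hc => ?_
        rw [Finset.mem_filter] at hc
        have hQz : Q c x a = 0 := by
          refine hZ c x a ⟨⟨i.1, hFF i.2⟩, hxi, ?_⟩
          have hcc : c ⟨i.1, hFF i.2⟩ = c' i := by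
            rw [← hc.2]
          rw [hcc]
          exact hai
        rw [hQz, mul_zero]
      rw [hS, zero_div]
    · rw [if_neg hpos, if_neg]
      intro hat
      apply hai
      rw [hat, htdef]
      simp [i.2]
  · intro x a
    rw [hrep x a, ← Finset.sum_fiberwise Finset.univ res (fun c => P c * Q c x a)]
    refine Finset.sum_congr rfl fun c' _ => ?_
    show S c' x a = P' c' * _
    dsimp only
    by_cases hpos : 0 < P' c'
    · rw [if_pos hpos, mul_div_cancel₀ _ (ne_of_gt hpos)]
    · rw [if_neg hpos]
      have h2 : P' c' = 0 := le_antisymm (not_lt.1 hpos) (hP'0 c')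
      rw [h2, zero_mul]
      exact hSzero c' x a hpos
end

section
/- In the bipartite scenario where party 1 has a friend and two inputs {1,2}, party 2 has arbitrarily many inputs, and all outputs are finite, every Local Friendliness behaviour admits an LHV model; hence LF = Bell-local set in this scenario. -/
open Finset

/-- bipartite scenario where party 1 has a friend and two inputs (input `0`
being the query input on which the outcome equals the friend's outcome `c`), and party 2
has `m` inputs. Every Local Friendliness behaviour admits a (deterministic, finite)
local hidden variable model. Here `Q c y a b` is the Local-Agency-satisfying conditional
`Q(a,b|x=2,y,c)` and `∑ a', Q c y a' b` is its marginal `Q(b|y,c)`. -/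
theorem lf_bipartite_two_inputs_lhv {A B : Type} [Fintype A] [DecidableEq A]
    [Fintype B] [DecidableEq B] (m : ℕ)
    (p : Fin 2 → Fin m → A → B → ℝ)
    (P : A → ℝ) (Q : A → Fin m → A → B → ℝ)
    (hP0 : ∀ c, 0 ≤ P c) (hP1 : ∑ c, P c = 1)
    (hQ0 : ∀ c y a b, 0 ≤ Q c y a b) (hQ1 : ∀ c y, ∑ a, ∑ b, Q c y a b = 1)
    (hLA : ∀ c y y' a, ∑ b, Q c y a b = ∑ b, Q c y' a b)
    (hp1 : ∀ y a b, p 0 y a b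
      = ∑ c, (if a = c then (1 : ℝ) else 0) * (∑ a', Q c y a' b) * P c)
    (hp2 : ∀ y a b, p 1 y a b = ∑ c, Q c y a b * P c) :
    ∃ (k : ℕ) (w : Fin k → ℝ) (α : Fin 2 → Fin k → A) (β : Fin m → Fin k → B),
      (∀ l, 0 ≤ w l) ∧ (∑ l, w l = 1) ∧
      ∀ x y a b, p x y a b = ∑ l, w l *
        (if a = α x l then (1 : ℝ) else 0) * (if b = β y l then (1 : ℝ) else 0) := by
  rcases Nat.eq_zero_or_pos m with hm | hm
  · -- m = 0 : the behaviour condition is vacuous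
    subst hm
    have hA : Nonempty A := by
      by_contra h
      rw [not_nonempty_iff] at h
      rw [Finset.univ_eq_empty, Finset.sum_empty] at hP1
      exact one_ne_zero hP1.symm
    refine ⟨1, fun _ => 1, fun _ _ => Classical.arbitrary A,
      fun y => isEmptyElim y, fun _ => zero_le_one, by simp, ?_⟩
    intro x y a b
    exact isEmptyElim y
  · -- main case: m ≥ 1
    have hm0 : m ≠ 0 := hm.ne'
    set y0 : Fin m := ⟨0, hm⟩ with hy0
    set r : A → A → ℝ := fun c a => ∑ b, Q c y0 a b with hrdef
    have hrm : ∀ c (y : Fin m) a, ∑ b, Q c y a b = r c a := fun c y a => hLA c y y0 a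
    have hrnn : ∀ c a, 0 ≤ r c a := fun c a =>
      Finset.sum_nonneg fun b _ => hQ0 c y0 a b
    have hr0 : ∀ c a, r c a = 0 → ∀ (y : Fin m) b, Q c y a b = 0 := by
      intro c a hr y b
      have h := (hrm c y a).trans hr
      have := (Finset.sum_eq_zero_iff_of_nonneg (fun b _ => hQ0 c y a b)).mp h
      exact this b (Finset.mem_univ b)
    -- the hidden variable space
    set Λ := A × A × (Fin m → B) with hΛ
    set W : Λ → ℝ := fun l =>
      P l.1 * (∏ y, Q l.1 y l.2.1 (l.2.2 y)) / (r l.1 l.2.1) ^ (m - 1) with hW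
    -- key identity: summing out Bob's responses with one value fixed
    have key : ∀ (c a : A) (y : Fin m) (b : B),
        (∑ f : Fin m → B, (if b = f y then (1 : ℝ) else 0) * ∏ y', Q c y' a (f y'))
          = Q c y a b * r c a ^ (m - 1) := by
      intro c a y b
      have h1 : ∀ f : Fin m → B,
          (if b = f y then (1 : ℝ) else 0) * ∏ y', Q c y' a (f y')
            = ∏ y', (if y' = y then (if b = f y' then Q c y' a (f y') else 0)
                else Q c y' a (f y')) := by
        intro f
        rw [Fintype.prod_eq_mul_prod_compl y (fun y' => Q c y' a (f y')),
          Fintype.prod_eq_mul_prod_compl y]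
        have hc : (∏ y' ∈ ({y}ᶜ : Finset (Fin m)),
            (if y' = y then (if b = f y' then Q c y' a (f y') else 0)
              else Q c y' a (f y')))
            = ∏ y' ∈ ({y}ᶜ : Finset (Fin m)), Q c y' a (f y') := by
          refine Finset.prod_congr rfl fun y' hy' => ?_
          rw [Finset.mem_compl, Finset.mem_singleton] at hy'
          simp [hy']
        rw [hc, if_pos rfl]
        split_ifs <;> ring
      rw [Finset.sum_congr rfl fun f _ => h1 f]
      rw [← Fintype.piFinset_univ,
        ← Finset.prod_univ_sum (fun _ : Fin m => (univ : Finset B))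
          (fun y' b' => if y' = y then (if b = b' then Q c y' a b' else 0)
            else Q c y' a b')]
      rw [Fintype.prod_eq_mul_prod_compl y]
      have h2 : (∑ b' : B, if y = y then (if b = b' then Q c y a b' else 0)
          else Q c y a b') = Q c y a b := by
        simp
      rw [h2]
      have h3 : (∏ y' ∈ ({y}ᶜ : Finset (Fin m)),
          ∑ b' : B, (if y' = y then (if b = b' then Q c y' a b' else 0)
            else Q c y' a b')) = r c a ^ (m - 1) := by
        have : ∀ y' ∈ ({y}ᶜ : Finset (Fin m)),
            (∑ b' : B, (if y' = y then (if b = b' then Q c y' a b' else 0)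
              else Q c y' a b')) = r c a := by
          intro y' hy'
          rw [Finset.mem_compl, Finset.mem_singleton] at hy'
          simp only [if_neg hy']
          exact hrm c y' a
        rw [Finset.prod_congr rfl this, Finset.prod_const]
        congr 1
        rw [Finset.card_compl, Finset.card_singleton, Fintype.card_fin]
      rw [h3]
    -- summing out all of Bob's responses
    have keyall : ∀ (c a : A),
        (∑ f : Fin m → B, ∏ y', Q c y' a (f y')) = r c a ^ m := by
      intro c a
      rw [← Fintype.piFinset_univ,
        ← Finset.prod_univ_sum (fun _ : Fin m => (univ : Finset B))
          (fun y' b' => Q c y' a b')]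
      have : ∀ y' ∈ (univ : Finset (Fin m)), (∑ b, Q c y' a b) = r c a :=
        fun y' _ => hrm c y' a
      rw [Finset.prod_congr rfl this, Finset.prod_const, Finset.card_univ,
        Fintype.card_fin]
    have hfrac : ∀ c (y : Fin m) a b,
        Q c y a b * r c a ^ (m - 1) / r c a ^ (m - 1) = Q c y a b := by
      intro c y a b
      rcases eq_or_ne (r c a) 0 with h | h
      · rw [hr0 c a h y b]; simp
      · exact mul_div_cancel_right₀ _ (pow_ne_zero _ h)
    -- weights are nonnegative
    have hWnn : ∀ l : Λ, 0 ≤ W l := by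
      intro l
      apply div_nonneg
      · exact mul_nonneg (hP0 _) (Finset.prod_nonneg fun y _ => hQ0 _ _ _ _)
      · exact pow_nonneg (hrnn _ _) _
    -- weights sum to one
    have hWsum : ∑ l : Λ, W l = 1 := by
      have hca : ∀ c a, (∑ f : Fin m → B, W (c, a, f)) = P c * r c a := by
        intro c a
        simp only [hW]
        rw [← Finset.sum_div, ← Finset.mul_sum, keyall]
        rcases eq_or_ne (r c a) 0 with h | h
        · rw [h]; simp [zero_pow hm0]
        · have hpow : r c a ^ m = r c a ^ (m - 1) * r c a := by
            rw [← pow_succ]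
            congr 1
            omega
          rw [hpow, mul_comm (r c a ^ (m - 1)) (r c a), ← mul_assoc,
            mul_div_cancel_right₀ _ (pow_ne_zero _ h)]
      have h4 : ∀ c, (∑ q : A × (Fin m → B), W (c, q)) = P c := by
        intro c
        rw [Fintype.sum_prod_type]
        have h5 : ∑ a, ∑ f : Fin m → B, W (c, a, f) = ∑ a, P c * r c a :=
          Finset.sum_congr rfl fun a _ => hca c a
        rw [h5, ← Finset.mul_sum]
        have h6 : ∑ a, r c a = 1 := by
          simp only [hrdef]
          exact hQ1 c y0
        rw [h6, mul_one]
      rw [Fintype.sum_prod_type, Finset.sum_congr rfl fun c _ => h4 c]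
      exact hP1
    -- transport along the equivalence with Fin k
    set k := Fintype.card Λ with hk
    set e : Λ ≃ Fin k := Fintype.equivFin Λ with he
    refine ⟨k, fun l => W (e.symm l),
      fun x l => if x = 0 then (e.symm l).1 else (e.symm l).2.1,
      fun y l => (e.symm l).2.2 y, fun l => hWnn _, ?_, ?_⟩
    · rw [Equiv.sum_comp e.symm W]; exact hWsum
    · intro x y a b
      fin_cases x
      · -- x = 0 : Alice reveals the friend's outcome
        simp only [Fin.zero_eta, Fin.isValue, reduceIte]
        rw [Equiv.sum_comp e.symm (fun l : Λ => W l *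
          (if a = l.1 then (1 : ℝ) else 0) * (if b = l.2.2 y then (1 : ℝ) else 0)),
          hp1, Fintype.sum_prod_type]
        refine Finset.sum_congr rfl fun c _ => ?_
        rw [Fintype.sum_prod_type]
        have hsum : ∀ a' : A, (∑ f : Fin m → B,
            W (c, a', f) * (if a = c then (1 : ℝ) else 0)
              * (if b = f y then (1 : ℝ) else 0))
            = (if a = c then (1 : ℝ) else 0) * (P c * Q c y a' b) := by
          intro a'
          simp only [hW]
          have hthis : ∀ f : Fin m → B,
              P c * (∏ y', Q c y' a' (f y')) / r c a' ^ (m - 1)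
                * (if a = c then (1 : ℝ) else 0) * (if b = f y then (1 : ℝ) else 0)
              = (if a = c then (1 : ℝ) else 0) *
                (P c * ((if b = f y then (1 : ℝ) else 0) * ∏ y', Q c y' a' (f y'))
                  / r c a' ^ (m - 1)) := by
            intro f; ring
          rw [Finset.sum_congr rfl fun f _ => hthis f, ← Finset.mul_sum,
            ← Finset.sum_div, ← Finset.mul_sum, key, mul_div_assoc, hfrac]
        rw [Finset.sum_congr rfl fun a' _ => hsum a', ← Finset.mul_sum,
          ← Finset.mul_sum]
        ring
      · -- x = 1 : Alice measures
        simp only [Fin.mk_one, Fin.isValue,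
          if_neg (show ¬((1 : Fin 2) = 0) from by decide)]
        rw [Equiv.sum_comp e.symm (fun l : Λ => W l *
          (if a = l.2.1 then (1 : ℝ) else 0) * (if b = l.2.2 y then (1 : ℝ) else 0)),
          hp2, Fintype.sum_prod_type]
        refine Finset.sum_congr rfl fun c _ => ?_
        rw [Fintype.sum_prod_type]
        have hsum : ∀ a' : A, (∑ f : Fin m → B,
            W (c, a', f) * (if a = a' then (1 : ℝ) else 0)
              * (if b = f y then (1 : ℝ) else 0))
            = (if a = a' then (1 : ℝ) else 0) * (P c * Q c y a' b) := by
          intro a'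
          simp only [hW]
          have hthis : ∀ f : Fin m → B,
              P c * (∏ y', Q c y' a' (f y')) / r c a' ^ (m - 1)
                * (if a = a' then (1 : ℝ) else 0) * (if b = f y then (1 : ℝ) else 0)
              = (if a = a' then (1 : ℝ) else 0) *
                (P c * ((if b = f y then (1 : ℝ) else 0) * ∏ y', Q c y' a' (f y'))
                  / r c a' ^ (m - 1)) := by
            intro f; ring
          rw [Finset.sum_congr rfl fun f _ => hthis f, ← Finset.mul_sum,
            ← Finset.sum_div, ← Finset.mul_sum, key, mul_div_assoc, hfrac]
        rw [Finset.sum_congr rfl fun a' _ => hsum a']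
        have hcoll : (∑ a' : A, (if a = a' then (1 : ℝ) else 0) * (P c * Q c y a' b))
            = P c * Q c y a b := by
          simp [ite_mul]
        rw [hcoll]
        ring
end

section
/- In the minimal nontrivial LF scenario (two parties, party 1 with a friend, both parties with two inputs and two outputs each), every behaviour satisfying the Local Friendliness decomposition admits a deterministic LHV model constructed explicitly: setting P(α_{x=2}, β_{y=1}, β_{y=2} | c) := Q(α, β_1 | x=2, y=1, c) · Q(α, β_2 | x=2, y=2, c) / Q(α | x=2, c) (zero when the denominator vanishes) defines a joint distribution, and combining it with δ_{α_{x=1}, c} and P(c) yields an LHV model reproducing ℘(a,b|x,y). -/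
open Finset

/-- minimal nontrivial LF scenario (two parties, party 1 with a friend, two
inputs and outputs in a finite set `O` each; input `0` is the query input). Given an LF
decomposition with friend-outcome distribution `P`, conditionals `Q c y a b = Q(a,b|x=2,y,c)`
satisfying Local Agency, the explicitly constructed chained joint
`J c α β₁ β₂ = Q(α,β₁|x=2,y=1,c) Q(α,β₂|x=2,y=2,c) / Q(α|x=2,c)` (zero when the denominator
vanishes) is, for each `c`, a probability distribution, and combining it with `δ_{α_{x=1},c}`
and `P(c)` yields a deterministic LHV model reproducing the behaviour. -/
theorem minimal_lf_explicit_lhv {O : Type} [Fintype O] [DecidableEq O]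
    (p : Fin 2 → Fin 2 → O → O → ℝ) (P : O → ℝ) (Q : O → Fin 2 → O → O → ℝ)
    (hP0 : ∀ c, 0 ≤ P c) (hP1 : ∑ c, P c = 1)
    (hQ0 : ∀ c y a b, 0 ≤ Q c y a b) (hQ1 : ∀ c y, ∑ a, ∑ b, Q c y a b = 1)
    (hLA : ∀ c y y' a, ∑ b, Q c y a b = ∑ b, Q c y' a b)
    (hp0 : ∀ y a b, p 0 y a b
      = ∑ c, (if a = c then (1 : ℝ) else 0) * (∑ a', Q c y a' b) * P c)
    (hp1 : ∀ y a b, p 1 y a b = ∑ c, Q c y a b * P c)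
    (J : O → O → O → O → ℝ)
    (hJ : ∀ c α β₁ β₂, J c α β₁ β₂ =
      if (∑ b, Q c 0 α b) = 0 then 0
      else Q c 0 α β₁ * Q c 1 α β₂ / (∑ b, Q c 0 α b)) :
    ((∀ c α β₁ β₂, 0 ≤ J c α β₁ β₂) ∧ (∀ c, ∑ α, ∑ β₁, ∑ β₂, J c α β₁ β₂ = 1)) ∧
    ∀ x y a b, p x y a b =
      ∑ c, ∑ α, ∑ β₁, ∑ β₂, (P c * J c α β₁ β₂) *
        (if a = (if x = 0 then c else α) then (1 : ℝ) else 0) *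
        (if b = (if y = 0 then β₁ else β₂) then (1 : ℝ) else 0) := by
  have hS0 : ∀ c α β, (∑ b, Q c 0 α b) = 0 → Q c 0 α β = 0 := by
    intro c α β h
    exact (Finset.sum_eq_zero_iff_of_nonneg (fun b _ => hQ0 c 0 α b)).mp h β (mem_univ β)
  have hS1 : ∀ c α β, (∑ b, Q c 0 α b) = 0 → Q c 1 α β = 0 := by
    intro c α β h
    have h' : (∑ b, Q c 1 α b) = 0 := by rw [hLA c 1 0 α]; exact h
    exact (Finset.sum_eq_zero_iff_of_nonneg (fun b _ => hQ0 c 1 α b)).mp h' β (mem_univ β)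
  have hA : ∀ c α β₁, ∑ β₂, J c α β₁ β₂ = Q c 0 α β₁ := by
    intro c α β₁
    by_cases h : (∑ b, Q c 0 α b) = 0
    · simp [hJ, h, hS0 c α β₁ h]
    · simp only [hJ, if_neg h]
      rw [← Finset.sum_div, ← Finset.mul_sum, hLA c 1 0 α, mul_div_assoc, div_self h, mul_one]
  have hB : ∀ c α β₂, ∑ β₁, J c α β₁ β₂ = Q c 1 α β₂ := by
    intro c α β₂
    by_cases h : (∑ b, Q c 0 α b) = 0
    · simp [hJ, h, hS1 c α β₂ h]
    · simp only [hJ, if_neg h]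
      rw [← Finset.sum_div, ← Finset.sum_mul, mul_comm, mul_div_assoc, div_self h, mul_one]
  have hnn : ∀ c α β₁ β₂, 0 ≤ J c α β₁ β₂ := by
    intro c α β₁ β₂
    rw [hJ]
    split
    · exact le_refl 0
    · exact div_nonneg (mul_nonneg (hQ0 _ _ _ _) (hQ0 _ _ _ _))
        (Finset.sum_nonneg fun b _ => hQ0 _ _ _ _)
  refine ⟨⟨hnn, ?_⟩, ?_⟩
  · intro c
    simp_rw [hA]
    exact hQ1 c 0
  · intro x y a b
    fin_cases x <;> fin_cases y <;>
      simp only [Fin.isValue, Fin.zero_eta, Fin.mk_one, hp0, hp1, if_pos rfl,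
        show ((1 : Fin 2) = 0) = False by simp, if_false, if_true, one_ne_zero, ite_false,
        ite_true] <;>
      refine Finset.sum_congr rfl fun c _ => ?_
    · have key : ∀ α β₁ β₂ : O, (P c * J c α β₁ β₂) * (if a = c then (1:ℝ) else 0) *
          (if b = β₁ then (1:ℝ) else 0)
          = (if a = c then (1:ℝ) else 0) * (P c * ((if b = β₁ then (1:ℝ) else 0) *
            J c α β₁ β₂)) := by intro α β₁ β₂; ring
      simp_rw [key, ← Finset.mul_sum, hA]
      simp only [ite_mul, one_mul, zero_mul, Finset.sum_ite_eq, mem_univ, if_true]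
      ring
    · have key : ∀ α β₁ β₂ : O, (P c * J c α β₁ β₂) * (if a = c then (1:ℝ) else 0) *
          (if b = β₂ then (1:ℝ) else 0)
          = (if a = c then (1:ℝ) else 0) * (P c * ((if b = β₂ then (1:ℝ) else 0) *
            J c α β₁ β₂)) := by intro α β₁ β₂; ring
      simp_rw [key, ← Finset.mul_sum]
      simp only [ite_mul, one_mul, zero_mul, Finset.sum_ite_eq, mem_univ, if_true]
      simp_rw [hB]
      ring
    · have key : ∀ α β₁ β₂ : O, (P c * J c α β₁ β₂) * (if a = α then (1:ℝ) else 0) *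
          (if b = β₁ then (1:ℝ) else 0)
          = (if a = α then (1:ℝ) else 0) * ((if b = β₁ then (1:ℝ) else 0) *
            (P c * J c α β₁ β₂)) := by intro α β₁ β₂; ring
      simp_rw [key, ← Finset.mul_sum, hA]
      simp only [ite_mul, one_mul, zero_mul, Finset.sum_ite_eq, mem_univ, if_true]
      ring
    · have key : ∀ α β₁ β₂ : O, (P c * J c α β₁ β₂) * (if a = α then (1:ℝ) else 0) *
          (if b = β₂ then (1:ℝ) else 0)
          = (if a = α then (1:ℝ) else 0) * ((if b = β₂ then (1:ℝ) else 0) *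
            (P c * J c α β₁ β₂)) := by intro α β₁ β₂; ring
      simp_rw [key, ← Finset.mul_sum]
      simp only [ite_mul, one_mul, zero_mul, Finset.sum_ite_eq, mem_univ, if_true]
      simp_rw [← Finset.mul_sum, hB]
      ring
end

section
/- The number of extreme points of the LF polytope in a canonical scenario equals [∏_{i ∈ I_F} |O_{x_i=1}|] × |EXT(NS(S_p'))|, where S_p' is the public scenario restricted to input tuples in which no party with a friend selects input 1; i.e., extreme LF behaviours are in bijection with pairs (c, l) of a friend-outcome tuple c and an extreme point l of the restricted no-signalling polytope. -/
open Finset MeasureTheory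

/-- No-signalling behaviours of the public scenario restricted to input tuples in which no
party with a friend (`i ∈ F`) selects the distinguished query input `one i`. -/
def NSRes {I : Type} [Fintype I] [DecidableEq I]
    {M : I → Type} [∀ i, Fintype (M i)] [∀ i, DecidableEq (M i)]
    {O : I → Type} [∀ i, Fintype (O i)] [∀ i, DecidableEq (O i)]
    (F : Finset I) (one : ∀ i, M i)
    (q : {x : ∀ i, M i // ∀ i ∈ F, x i ≠ one i} → (∀ i, O i) → ℝ) : Prop :=
  (∀ x a, 0 ≤ q x a) ∧ (∀ x, ∑ a, q x a = 1) ∧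
  ∀ (x x' : {x : ∀ i, M i // ∀ i ∈ F, x i ≠ one i}) (i : I),
    (∀ j, j ≠ i → x.1 j = x'.1 j) →
    ∀ a : ∀ i, O i,
      ∑ b : O i, q x (Function.update a i b) = ∑ b : O i, q x' (Function.update a i b)

/-!
For a friend outcome `c`, let `K c` (`IsFriendConsistent F one c`) be the set of behaviours with
local agency in which every queried friend-party (input `one i`, `i ∈ F`) outputs `c i`; an LF
behaviour is exactly a convex combination `∑ c, P c • Q c` with `Q c ∈ K c`.

The functional "probability that the outcomes of the friend-parties are `c` when all parties
query" takes the value `P c` on such a combination, so it is `≤ 1` on the LF polytope and cuts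
out `K c` as the face where it equals `1`. An extreme LF behaviour is an extreme point of the
convex hull of its own decomposition, hence lies in some `K c`; so the extreme points of the LF
polytope are the disjoint union over `c` of the extreme points of the faces `K c`.

Restriction to the non-query inputs maps `K c` linearly and bijectively onto the restricted
no-signalling polytope. The inverse fixes one non-query input tuple `x₀`: the queried parties
output `c`, and the others behave as on the input in which each query is replaced by the entry
of `x₀`; no-signalling makes this behaviour satisfy local agency.
-/

namespace LocalFriendliness

open Function

abbrev FriendOutcome {I : Type} (F : Finset I) (O : I → Type) : Type :=
  ∀ i : {j // j ∈ F}, O i.1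

abbrev Behaviour {I : Type} (M O : I → Type) : Type :=
  (∀ i, M i) → (∀ i, O i) → ℝ

section ExtremePoints

open Set

variable {E E' : Type*} [AddCommGroup E] [Module ℝ E] [AddCommGroup E'] [Module ℝ E']

theorem isExtreme_setOf_eq_of_le {A : Set E} (m : E →ₗ[ℝ] ℝ) {r : ℝ} (h : ∀ x ∈ A, m x ≤ r) :
    IsExtreme ℝ A {x ∈ A | m x = r} := by
  refine ⟨sep_subset _ _, fun x₁ h₁ x₂ h₂ x ⟨_, hx⟩ ⟨t, u, ht, hu, htu, hseg⟩ => ?_⟩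
  rw [← hseg, map_add, map_smul, map_smul, smul_eq_mul, smul_eq_mul] at hx
  have h₁r := h x₁ h₁
  have h₂r := h x₂ h₂
  refine ⟨h₁, le_antisymm h₁r (le_of_not_gt fun hlt => ?_)⟩
  have : r = t * r + u * r := by rw [← add_mul, htu, one_mul]
  linarith [mul_lt_mul_of_pos_left hlt ht, mul_le_mul_of_nonneg_left h₂r hu.le]

theorem mapsTo_extremePoints_of_invOn {A : Set E} {B : Set E'} {f : E →ₗ[ℝ] E'} {g : E' → E}
    (hf : MapsTo f A B) (hg : MapsTo g B A) (hinv : InvOn g f A B) :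
    MapsTo g (B.extremePoints ℝ) (A.extremePoints ℝ) := by
  intro y hy
  refine ⟨hg hy.1, fun x₁ h₁ x₂ h₂ ⟨t, u, ht, hu, htu, hseg⟩ => ?_⟩
  have hfy : y ∈ openSegment ℝ (f x₁) (f x₂) :=
    ⟨t, u, ht, hu, htu, by rw [← map_smul, ← map_smul, ← map_add, hseg, hinv.2 hy.1]⟩
  rw [← hinv.1 h₁, hy.2 (hf h₁) (hf h₂) hfy]

theorem image_extremePoints_of_invOn {A : Set E} {B : Set E'} {f : E →ₗ[ℝ] E'}
    {g : E' →ₗ[ℝ] E} (hf : MapsTo f A B) (hg : MapsTo g B A) (hinv : InvOn g f A B) :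
    g '' B.extremePoints ℝ = A.extremePoints ℝ :=
  (mapsTo_extremePoints_of_invOn hf hg hinv).image_subset.antisymm fun x hx =>
    ⟨f x, mapsTo_extremePoints_of_invOn hg hf hinv.symm hx, hinv.1 hx.1⟩

theorem convexHull_range_eq_image_stdSimplex {ι : Type*} [Fintype ι] [DecidableEq ι]
    (v : ι → E) : convexHull ℝ (range v) = Fintype.linearCombination ℝ v '' stdSimplex ℝ ι := by
  rw [← convexHull_rangle_single_eq_stdSimplex, LinearMap.image_convexHull, ← range_comp]
  congr 2
  funext i
  simp [Fintype.linearCombination_apply_single]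

theorem mem_range_of_mem_extremePoints {ι : Type*} [Fintype ι] {A : Set E} {v : ι → E}
    (hA : ∀ w ∈ stdSimplex ℝ ι, ∑ i, w i • v i ∈ A) {w : ι → ℝ} (hw : w ∈ stdSimplex ℝ ι)
    (hext : ∑ i, w i • v i ∈ A.extremePoints ℝ) : ∑ i, w i • v i ∈ range v := by
  classical
  have hsub : convexHull ℝ (range v) ⊆ A := by
    rw [convexHull_range_eq_image_stdSimplex]
    rintro _ ⟨w', hw', rfl⟩
    simpa [Fintype.linearCombination_apply] using hA w' hw'
  have hmem : ∑ i, w i • v i ∈ convexHull ℝ (range v) :=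
    mem_convexHull_of_exists_fintype w v hw.1 hw.2 (mem_range_self ·) rfl
  exact extremePoints_convexHull_subset
    (inter_extremePoints_subset_extremePoints_of_subset hsub ⟨hmem, hext⟩)

theorem eq_single_of_mem_stdSimplex {ι : Type*} [Fintype ι] [DecidableEq ι] {w : ι → ℝ}
    (hw : w ∈ stdSimplex ℝ ι) {i : ι} (hi : w i = 1) : w = Pi.single i 1 := by
  funext j
  rcases eq_or_ne j i with rfl | hji
  · simp [hi]
  · have := Finset.add_le_sum (fun k _ => hw.1 k) (Finset.mem_univ j) (Finset.mem_univ i) hji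
    rw [hw.2, hi] at this
    simp [hji, le_antisymm (by linarith) (hw.1 j)]

end ExtremePoints

section Marginal

variable {I : Type} [Fintype I] [DecidableEq I]
  {O : I → Type} [∀ i, Fintype (O i)] [∀ i, DecidableEq (O i)]

def marginal (V : Finset I) (q : (∀ i, O i) → ℝ) (a : ∀ i, O i) : ℝ :=
  ∑ b ∈ univ.filter (fun b : ∀ i, O i => ∀ i ∈ V, b i = a i), q b

theorem marginal_univ (q : (∀ i, O i) → ℝ) (a : ∀ i, O i) : marginal univ q a = q a := by
  have : univ.filter (fun b : ∀ i, O i => ∀ i ∈ univ, b i = a i) = {a} := by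
    ext b; simp [funext_iff]
  rw [marginal, this, sum_singleton]

theorem sum_update_eq_marginal_erase (q : (∀ i, O i) → ℝ) (j : I) (a : ∀ i, O i) :
    ∑ β, q (update a j β) = marginal (univ.erase j) q a := by
  refine sum_nbij' (update a j) (· j) (fun β _ => ?_) (by simp) (by simp) (fun b hb => ?_)
    (by simp)
  · simp only [mem_filter, mem_univ, true_and, mem_erase]
    exact fun i hi => update_of_ne hi.1 _ _
  · simp only [mem_filter, mem_univ, true_and, mem_erase, and_true] at hb
    funext k
    by_cases hk : k = j
    · subst hk; simp
    · simp [update_of_ne hk, hb k hk]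

theorem marginal_eq_sum_sum_update {W : Finset I} {j : I} (hj : j ∉ W)
    (q : (∀ i, O i) → ℝ) (a : ∀ i, O i) :
    marginal W q a =
      ∑ b ∈ univ.filter (fun b : ∀ i, O i => (∀ i ∈ W, b i = a i) ∧ b j = a j),
        ∑ β, q (update b j β) := by
  have hne : ∀ i ∈ W, i ≠ j := fun i hi h => hj (h ▸ hi)
  rw [marginal, ← sum_product']
  symm
  refine sum_nbij' (fun p => update p.1 j p.2) (fun b => (update b j (a j), b j))
    ?_ ?_ ?_ ?_ (fun _ _ => rfl)
  · simp +contextual [update_of_ne, hne]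
  · simp +contextual [update_of_ne, hne]
  · rintro ⟨b, β⟩ hb
    simp only [mem_product, mem_filter, mem_univ, true_and, and_true] at hb
    simp [← hb.2]
  · simp

theorem _root_.LocalAgency.sum_update_eq {M : I → Type} {Q : Behaviour M O}
    (hQ : LocalAgency Q) {x x' : ∀ i, M i} {j : I} (h : ∀ i, i ≠ j → x i = x' i)
    (a : ∀ i, O i) : ∑ β, Q x (update a j β) = ∑ β, Q x' (update a j β) := by
  rw [sum_update_eq_marginal_erase, sum_update_eq_marginal_erase]
  exact hQ _ x x' (fun i hi => h i (ne_of_mem_erase hi)) a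

end Marginal

section Scenario

variable {I : Type} [Fintype I] [DecidableEq I] {M : I → Type}
  {O : I → Type} [∀ i, Fintype (O i)] [∀ i, DecidableEq (O i)]

abbrev RestrictedInput (F : Finset I) (one : ∀ i, M i) :=
  {x : ∀ i, M i // ∀ i ∈ F, x i ≠ one i}

variable {F : Finset I} {one : ∀ i, M i}

def RestrictedInput.updateFrom (y y' : RestrictedInput F one) (j : I) :
    RestrictedInput F one :=
  ⟨update y.1 j (y'.1 j), fun i hi => by
    by_cases hij : i = j
    · subst hij; simpa using y'.2 i hi
    · simpa [update_of_ne hij] using y.2 i hi⟩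

variable (F one) in
structure IsFriendConsistent (c : FriendOutcome F O) (Q : Behaviour M O) : Prop where
  nonneg : ∀ x a, 0 ≤ Q x a
  sum_eq_one : ∀ x, ∑ a, Q x a = 1
  localAgency : LocalAgency Q
  eq_zero : ∀ x a, (∃ i : {j // j ∈ F}, x i.1 = one i.1 ∧ a i.1 ≠ c i) → Q x a = 0

variable (F one) in
theorem isLF_iff {p : Behaviour M O} :
    IsLF F one p ↔ ∃ P ∈ stdSimplex ℝ (FriendOutcome F O),
      ∃ Q : FriendOutcome F O → Behaviour M O,
        (∀ c, IsFriendConsistent F one c (Q c)) ∧ p = ∑ c, P c • Q c := by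
  constructor
  · rintro ⟨P, Q, hP0, hP1, hQ0, hQ1, hQla, hQz, hp⟩
    exact ⟨P, ⟨hP0, hP1⟩, Q, fun c => ⟨hQ0 c, hQ1 c, hQla c, hQz c⟩,
      funext₂ fun x a => by simp [hp, Finset.sum_apply]⟩
  · rintro ⟨P, ⟨hP0, hP1⟩, Q, hQ, rfl⟩
    exact ⟨P, Q, hP0, hP1, fun c => (hQ c).nonneg, fun c => (hQ c).sum_eq_one,
      fun c => (hQ c).localAgency, fun c => (hQ c).eq_zero, fun x a => by simp [Finset.sum_apply]⟩

theorem exists_isFriendConsistent_of_mem_extremePoints {p : Behaviour M O}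
    (hp : p ∈ Set.extremePoints ℝ {p | IsLF F one p}) :
    ∃ c, IsFriendConsistent F one c p := by
  obtain ⟨P, hP, Q, hQ, rfl⟩ := (isLF_iff F one).1 hp.1
  obtain ⟨c, hc⟩ := mem_range_of_mem_extremePoints
    (fun w hw => (isLF_iff F one).2 ⟨w, hw, Q, hQ, rfl⟩) hP hp
  exact ⟨c, hc ▸ hQ c⟩

variable (one) in
def queryWeight (c : FriendOutcome F O) : Behaviour M O →ₗ[ℝ] ℝ where
  toFun p := ∑ a ∈ univ.filter (fun a : ∀ i, O i => ∀ i : {j // j ∈ F}, a i.1 = c i),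
    p one a
  map_add' p q := sum_add_distrib
  map_smul' t p := by simp [mul_sum]

theorem IsFriendConsistent.queryWeight_eq {c' : FriendOutcome F O} {Q : Behaviour M O}
    (hQ : IsFriendConsistent F one c' Q) (c : FriendOutcome F O) :
    queryWeight one c Q = if c' = c then 1 else 0 := by
  simp only [queryWeight, LinearMap.coe_mk, AddHom.coe_mk]
  split_ifs with h
  · subst h
    rw [← hQ.sum_eq_one one]
    refine sum_subset (filter_subset _ _) fun a _ ha => hQ.eq_zero one a ?_
    simpa using ha
  · obtain ⟨i, hi⟩ := Function.ne_iff.1 h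
    exact sum_eq_zero fun a ha => hQ.eq_zero one a ⟨i, rfl, (mem_filter.1 ha).2 i ▸ hi.symm⟩

theorem queryWeight_sum {Q : FriendOutcome F O → Behaviour M O}
    (hQ : ∀ c, IsFriendConsistent F one c (Q c)) (P : FriendOutcome F O → ℝ)
    (c : FriendOutcome F O) : queryWeight one c (∑ c', P c' • Q c') = P c := by
  simp [(hQ _).queryWeight_eq]

theorem IsFriendConsistent.unique {c c' : FriendOutcome F O} {Q : Behaviour M O}
    (h : IsFriendConsistent F one c Q) (h' : IsFriendConsistent F one c' Q) : c = c' :=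
  (by simpa [h.queryWeight_eq] using h'.queryWeight_eq c : c' = c).symm

variable (F one) in
def restrict : Behaviour M O →ₗ[ℝ] RestrictedInput F one → (∀ i, O i) → ℝ :=
  LinearMap.funLeft ℝ _ Subtype.val

section Extend

variable [∀ i, DecidableEq (M i)]

def replaceQueries (x₀ : RestrictedInput F one) (x : ∀ i, M i) : RestrictedInput F one :=
  ⟨fun i => if i ∈ F ∧ x i = one i then x₀.1 i else x i, fun i hi => by
    by_cases h : x i = one i
    · simpa [hi, h] using x₀.2 i hi
    · simp [h]⟩

variable (one) in
def fillFriends (c : FriendOutcome F O) (x : ∀ i, M i) (b : ∀ i, O i) : ∀ i, O i :=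
  fun i => if h : i ∈ F ∧ x i = one i then c ⟨i, h.1⟩ else b i

def extend (x₀ : RestrictedInput F one) (c : FriendOutcome F O) :
    (RestrictedInput F one → (∀ i, O i) → ℝ) →ₗ[ℝ] Behaviour M O where
  toFun l x a :=
    ∑ b ∈ univ.filter (fun b => fillFriends one c x b = a), l (replaceQueries x₀ x) b
  map_add' l l' := by ext; simp [sum_add_distrib]
  map_smul' t l := by ext; simp [mul_sum]

theorem marginal_extend (x₀ : RestrictedInput F one) (c : FriendOutcome F O)
    (l : RestrictedInput F one → (∀ i, O i) → ℝ) (V : Finset I) (x : ∀ i, M i)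
    (a : ∀ i, O i) :
    marginal V (extend x₀ c l x) a =
      if ∀ i ∈ V, ∀ h : i ∈ F ∧ x i = one i, a i = c ⟨i, h.1⟩ then
        marginal (V.filter fun i => ¬(i ∈ F ∧ x i = one i)) (l (replaceQueries x₀ x)) a
      else 0 := by
  rw [marginal, extend, LinearMap.coe_mk, AddHom.coe_mk, sum_fiberwise_eq_sum_filter]
  split_ifs with hA
  · refine sum_congr (filter_congr fun b _ => ?_) fun _ _ => rfl
    simp only [mem_filter, mem_univ, true_and, fillFriends]
    refine ⟨fun h i hi => ?_, fun h i hi => ?_⟩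
    · simpa [dif_neg hi.2] using h i hi.1
    · by_cases hq : i ∈ F ∧ x i = one i
      · simpa [dif_pos hq] using (hA i hi hq).symm
      · simpa [dif_neg hq] using h i ⟨hi, hq⟩
  · refine sum_eq_zero fun b hb => absurd ?_ hA
    simp only [mem_filter, mem_univ, true_and, fillFriends] at hb
    intro i hi hq
    simpa [dif_pos hq] using (hb i hi).symm

theorem restrict_extend (x₀ : RestrictedInput F one) (c : FriendOutcome F O)
    (l : RestrictedInput F one → (∀ i, O i) → ℝ) :
    restrict F one (extend x₀ c l) = l := by
  funext y a
  have hfill : ∀ b, fillFriends one c y.1 b = b := fun b =>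
    funext fun i => dif_neg fun h => y.2 i h.1 h.2
  have hreplace : replaceQueries x₀ y.1 = y :=
    Subtype.ext <| funext fun i => if_neg fun h => y.2 i h.1 h.2
  simp [restrict, LinearMap.funLeft_apply, extend, hfill, hreplace, filter_eq']

theorem IsFriendConsistent.extend_restrict {c : FriendOutcome F O} {Q : Behaviour M O}
    (hQ : IsFriendConsistent F one c Q) (x₀ : RestrictedInput F one) :
    extend x₀ c (restrict F one Q) = Q := by
  funext x a
  rw [← marginal_univ (extend x₀ c _ x), marginal_extend]
  split_ifs with hA
  · set W := univ.filter fun i => ¬(i ∈ F ∧ x i = one i)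
    have hagree : ∀ i ∈ W, (replaceQueries x₀ x).1 i = x i := fun i hi =>
      if_neg (mem_filter.1 hi).2
    calc marginal W (Q (replaceQueries x₀ x).1) a = marginal W (Q x) a :=
          hQ.localAgency W _ x hagree a
      _ = Q x a := by
          refine sum_eq_single_of_mem a (by simp) fun b hb hba => hQ.eq_zero x b ?_
          obtain ⟨i, hi⟩ := Function.ne_iff.1 hba
          have hq : i ∈ F ∧ x i = one i := by
            by_contra hq
            exact hi ((mem_filter.1 hb).2 i (mem_filter.2 ⟨mem_univ i, hq⟩))
          exact ⟨⟨i, hq.1⟩, hq.2, hA i (mem_univ i) hq ▸ hi⟩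
  · push Not at hA
    obtain ⟨i, -, hq, hai⟩ := hA
    exact (hQ.eq_zero x a ⟨⟨i, hq.1⟩, hq.2, hai⟩).symm

variable [∀ i, Fintype (M i)]

theorem _root_.NSRes.marginal_congr {l : RestrictedInput F one → (∀ i, O i) → ℝ}
    (hl : NSRes F one l) {W : Finset I} {y y' : RestrictedInput F one}
    (h : ∀ i ∈ W, y.1 i = y'.1 i) (a : ∀ i, O i) :
    marginal W (l y) a = marginal W (l y') a := by
  suffices ∀ T : Finset I, ∀ y y' : RestrictedInput F one, (∀ i ∉ T, y.1 i = y'.1 i) →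
      (∀ i ∈ W, y.1 i = y'.1 i) → marginal W (l y) a = marginal W (l y') a from
    this univ y y' (by simp) h
  intro T
  induction T using Finset.induction_on with
  | empty =>
    intro y y' hT _
    rw [Subtype.ext (funext fun i => hT i (notMem_empty i))]
  | @insert j T _ ih =>
    intro y y' hT hW
    by_cases hj : y.1 j = y'.1 j
    · refine ih y y' (fun i hi => ?_) hW
      by_cases hij : i = j
      · exact hij ▸ hj
      · exact hT i (by simp [hij, hi])
    · have hjW : j ∉ W := fun hjW => hj (hW j hjW)
      let z := y.updateFrom y' j
      calc marginal W (l y) a = marginal W (l z) a := by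
            simp only [marginal_eq_sum_sum_update hjW]
            refine sum_congr rfl fun b _ => hl.2.2 y z j (fun i hi => ?_) b
            simp [z, RestrictedInput.updateFrom, update_of_ne hi]
        _ = marginal W (l y') a := by
            refine ih z y' (fun i hi => ?_) (fun i hi => ?_)
            all_goals by_cases hij : i = j
            · subst hij; simp [z, RestrictedInput.updateFrom]
            · simpa [z, RestrictedInput.updateFrom, update_of_ne hij]
                using hT i (by simp [hij, hi])
            · subst hij; simp [z, RestrictedInput.updateFrom]
            · simpa [z, RestrictedInput.updateFrom, update_of_ne hij] using hW i hi

theorem _root_.NSRes.isFriendConsistent_extend {l : RestrictedInput F one → (∀ i, O i) → ℝ}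
    (hl : NSRes F one l) (x₀ : RestrictedInput F one) (c : FriendOutcome F O) :
    IsFriendConsistent F one c (extend x₀ c l) where
  nonneg x a := sum_nonneg fun b _ => hl.1 _ b
  sum_eq_one x := by
    simp only [extend, LinearMap.coe_mk, AddHom.coe_mk]
    rw [sum_fiberwise, hl.2.1]
  localAgency V x x' hxx' a := by
    have hq : ∀ i ∈ V, (i ∈ F ∧ x i = one i ↔ i ∈ F ∧ x' i = one i) := fun i hi => by
      rw [hxx' i hi]
    have hW : (V.filter fun i => ¬(i ∈ F ∧ x i = one i)) =
        V.filter fun i => ¬(i ∈ F ∧ x' i = one i) :=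
      filter_congr fun i hi => not_congr (hq i hi)
    show marginal V _ a = marginal V _ a
    rw [marginal_extend, marginal_extend, hW]
    refine if_congr ?_ (hl.marginal_congr (fun i hi => ?_) a) rfl
    · exact forall₂_congr fun i hi =>
        ⟨fun h hq' => h ((hq i hi).2 hq'), fun h hq' => h ((hq i hi).1 hq')⟩
    · simp only [replaceQueries, hxx' i (mem_filter.1 hi).1]
  eq_zero x a := by
    rintro ⟨i, hx, ha⟩
    refine sum_eq_zero fun b hb => absurd ?_ ha
    rw [← (mem_filter.1 hb).2, fillFriends, dif_pos ⟨i.2, hx⟩]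

theorem IsFriendConsistent.nsRes_restrict {c : FriendOutcome F O} {Q : Behaviour M O}
    (hQ : IsFriendConsistent F one c Q) : NSRes F one (restrict F one Q) :=
  ⟨fun y => hQ.nonneg y.1, fun y => hQ.sum_eq_one y.1,
    fun _ _ _ h => hQ.localAgency.sum_update_eq h⟩

theorem IsFriendConsistent.isLF {c : FriendOutcome F O} {Q : Behaviour M O}
    (hQ : IsFriendConsistent F one c Q) (x₀ : RestrictedInput F one) : IsLF F one Q :=
  (isLF_iff F one).2 ⟨Pi.single c 1, single_mem_stdSimplex ℝ c,
    fun c' => extend x₀ c' (restrict F one Q),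
    fun c' => hQ.nsRes_restrict.isFriendConsistent_extend x₀ c',
    by simp [Pi.single_apply, hQ.extend_restrict]⟩

theorem setOf_isFriendConsistent_eq (x₀ : RestrictedInput F one) (c : FriendOutcome F O) :
    {Q | IsFriendConsistent F one c Q} = {p ∈ {p | IsLF F one p} | queryWeight one c p = 1} := by
  ext p
  refine ⟨fun hp => ⟨hp.isLF x₀, by simp [hp.queryWeight_eq]⟩, fun ⟨hp, hw⟩ => ?_⟩
  obtain ⟨P, hP, Q, hQ, rfl⟩ := (isLF_iff F one).1 hp
  rw [queryWeight_sum hQ] at hw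
  simpa [eq_single_of_mem_stdSimplex hP hw, Pi.single_apply] using hQ c

theorem isExtreme_setOf_isFriendConsistent (x₀ : RestrictedInput F one)
    (c : FriendOutcome F O) :
    IsExtreme ℝ {p | IsLF F one p} {Q | IsFriendConsistent F one c Q} := by
  rw [setOf_isFriendConsistent_eq x₀]
  refine isExtreme_setOf_eq_of_le _ fun p hp => ?_
  obtain ⟨P, hP, Q, hQ, rfl⟩ := (isLF_iff F one).1 hp
  rw [queryWeight_sum hQ]
  exact (mem_Icc_of_mem_stdSimplex hP c).2

theorem image_extend_extremePoints (x₀ : RestrictedInput F one) (c : FriendOutcome F O) :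
    extend x₀ c '' Set.extremePoints ℝ {l | NSRes F one l} =
      Set.extremePoints ℝ {Q | IsFriendConsistent F one c Q} :=
  image_extremePoints_of_invOn (f := restrict F one) (fun _ hQ => hQ.nsRes_restrict)
    (fun _ hl => hl.isFriendConsistent_extend x₀ c)
    ⟨fun _ hQ => hQ.extend_restrict x₀, fun l _ => restrict_extend x₀ c l⟩

theorem bijOn_extend_extremePoints (x₀ : RestrictedInput F one) :
    Set.BijOn (fun p : FriendOutcome F O × (RestrictedInput F one → (∀ i, O i) → ℝ) =>
        extend x₀ p.1 p.2)
      (Set.univ ×ˢ Set.extremePoints ℝ {l | NSRes F one l})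
      (Set.extremePoints ℝ {p | IsLF F one p}) := by
  refine ⟨?_, ?_, fun p hp => ?_⟩
  · rintro ⟨c, l⟩ ⟨-, hl⟩
    exact (isExtreme_setOf_isFriendConsistent x₀ c).extremePoints_subset_extremePoints
      (image_extend_extremePoints x₀ c ▸ Set.mem_image_of_mem _ hl)
  · rintro ⟨c, l⟩ ⟨-, hl⟩ ⟨c', l'⟩ ⟨-, hl'⟩ h
    dsimp only at h
    obtain rfl : c = c' :=
      (hl.1.isFriendConsistent_extend x₀ c).unique (h ▸ hl'.1.isFriendConsistent_extend x₀ c')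
    simpa [restrict_extend] using congrArg (restrict F one) h
  · obtain ⟨c, hc⟩ := exists_isFriendConsistent_of_mem_extremePoints hp
    have hpc := inter_extremePoints_subset_extremePoints_of_subset
      (isExtreme_setOf_isFriendConsistent x₀ c).1 ⟨hc, hp⟩
    rw [← image_extend_extremePoints x₀ c] at hpc
    obtain ⟨l, hl, rfl⟩ := hpc
    exact ⟨(c, l), ⟨Set.mem_univ c, hl⟩, rfl⟩

end Extend

end Scenario

end LocalFriendliness

theorem lf_extreme_point_count_general {I : Type} [Fintype I] [DecidableEq I]
    {M : I → Type} [∀ i, Fintype (M i)] [∀ i, DecidableEq (M i)]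
    {O : I → Type} [∀ i, Fintype (O i)] [∀ i, DecidableEq (O i)]
    (hM : ∀ i, 2 ≤ Fintype.card (M i))
    (F : Finset I) (one : ∀ i, M i) :
    Nat.card ↥(Set.extremePoints ℝ
        {p : (∀ i, M i) → (∀ i, O i) → ℝ | IsLF F one p})
      = (∏ i : {j // j ∈ F}, Fintype.card (O i.1)) *
        Nat.card ↥(Set.extremePoints ℝ
          {q : {x : ∀ i, M i // ∀ i ∈ F, x i ≠ one i} → (∀ i, O i) → ℝ |
            NSRes F one q}) := by
  obtain ⟨x₀⟩ : Nonempty (LocalFriendliness.RestrictedInput F one) := by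
    choose other hother using fun i => Fintype.exists_ne_of_one_lt_card (hM i) (one i)
    exact ⟨⟨other, fun i _ => hother i⟩⟩
  rw [← Nat.card_congr (LocalFriendliness.bijOn_extend_extremePoints x₀).equiv,
    Nat.card_congr (Equiv.Set.prod _ _), Nat.card_prod, Nat.card_congr (Equiv.Set.univ _),
    Nat.card_eq_fintype_card, Fintype.card_pi]

/-- the number of extreme points of the LF polytope equals the product of the
numbers of friend outcomes times the number of extreme points of the no-signalling polytope
of the restricted scenario in which no friend-having party uses the query input. -/
theorem lf_extreme_point_count {I : Type} [Fintype I] [DecidableEq I]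
    {M : I → Type} [∀ i, Fintype (M i)] [∀ i, DecidableEq (M i)]
    {O : I → Type} [∀ i, Fintype (O i)] [∀ i, DecidableEq (O i)]
    (hI : 2 ≤ Fintype.card I) (hM : ∀ i, 2 ≤ Fintype.card (M i))
    (hO : ∀ i, 2 ≤ Fintype.card (O i))
    (F : Finset I) (one : ∀ i, M i) :
    Nat.card ↥(Set.extremePoints ℝ
        {p : (∀ i, M i) → (∀ i, O i) → ℝ | IsLF F one p})
      = (∏ i : {j // j ∈ F}, Fintype.card (O i.1)) *
        Nat.card ↥(Set.extremePoints ℝ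
          {q : {x : ∀ i, M i // ∀ i ∈ F, x i ≠ one i} → (∀ i, O i) → ℝ |
            NSRes F one q}) :=
  lf_extreme_point_count_general hM F one
end
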